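/- arXiv:2505.05126 — 2 statements merged into one kernel-verified Lean document; each statement's English description precedes it below -/
import Mathlib

section
/- Let 0 < τ₁ ≤ τ₂ < 1, let V₁ be a τ₁-expectile Bellman fixed point and V₂ a τ₂-expectile Bellman fixed point. Then V₁ s ≤ V₂ s for every s ∈ S; that is, the τ-expectile Bellman fixed point is monotonically non-decreasing in τ. -/
/-!
The τ-FOC says that `y` is a zero of the gap `y ↦ ∑ᵢ vᵢ φ_τ(zᵢ - y)`, where
`φ_τ(t) = τ t⁺ - (1 - τ) t⁻`. For `0 < τ < 1` this gap is strictly decreasing in `y`,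
non-decreasing in `τ` and in the values `z`, and invariant under shifting `y` and `z` by the same
constant. Hence if `z₁ ≤ z₂ + c`, the τ₁-expectile of `z₁` is at most the τ₂-expectile of `z₂`
plus `c`. Applied at a state `s₀` maximising `M = V₁ - V₂`, with values shifted by at most `γ M`,
this gives `M ≤ γ M`, so `M ≤ 0`.
-/

open Finset

/-- `y` satisfies the τ-expectile first-order condition (FOC) for weights `v` and values `z`. -/
def ExpectileFOC {κ : Type*} [Fintype κ] (τ : ℝ) (v z : κ → ℝ) (y : ℝ) : Prop :=
  τ * ∑ i, v i * max (z i - y) 0 = (1 - τ) * ∑ i, v i * max (y - z i) 0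

/-- `U` is a τ-expectile Bellman image of `V`: for every state `s`, `U s` satisfies the
τ-FOC for weights `w s` and values `(a, s') ↦ ρ s (a, s') + γ * V s'`. -/
def IsExpectileBellmanImage {S A : Type*} [Fintype S] [Fintype A]
    (γ τ : ℝ) (w : S → A × S → ℝ) (ρ : S → A × S → ℝ) (V U : S → ℝ) : Prop :=
  ∀ s, ExpectileFOC τ (w s) (fun p => ρ s p + γ * V p.2) (U s)

noncomputable section

def expectileScore (τ t : ℝ) : ℝ :=
  τ * max t 0 - (1 - τ) * max (-t) 0

def expectileGap {κ : Type*} [Fintype κ] (τ : ℝ) (v z : κ → ℝ) (y : ℝ) : ℝ :=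
  ∑ i, v i * expectileScore τ (z i - y)

end

theorem monotone_expectileScore_left (t : ℝ) : Monotone fun τ => expectileScore τ t := by
  intro τ₁ τ₂ h
  simp only [expectileScore]
  nlinarith [le_max_right t 0, le_max_right (-t) 0]

theorem expectileScore_of_nonneg (τ : ℝ) {t : ℝ} (ht : 0 ≤ t) : expectileScore τ t = τ * t := by
  simp [expectileScore, ht]

theorem expectileScore_of_nonpos (τ : ℝ) {t : ℝ} (ht : t ≤ 0) :
    expectileScore τ t = (1 - τ) * t := by
  simp [expectileScore, ht]

theorem monotone_expectileScore {τ : ℝ} (h₀ : 0 ≤ τ) (h₁ : τ ≤ 1) :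
    Monotone (expectileScore τ) := by
  intro s t hst
  rcases le_total t 0 with ht | ht
  · rw [expectileScore_of_nonpos τ ht, expectileScore_of_nonpos τ (hst.trans ht)]
    exact mul_le_mul_of_nonneg_left hst (sub_nonneg.2 h₁)
  rcases le_total 0 s with hs | hs
  · rw [expectileScore_of_nonneg τ ht, expectileScore_of_nonneg τ hs]
    exact mul_le_mul_of_nonneg_left hst h₀
  · rw [expectileScore_of_nonneg τ ht, expectileScore_of_nonpos τ hs]
    nlinarith [mul_nonneg h₀ ht, mul_nonpos_of_nonneg_of_nonpos (sub_nonneg.2 h₁) hs]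

theorem strictMono_expectileScore {τ : ℝ} (h₀ : 0 < τ) (h₁ : τ < 1) :
    StrictMono (expectileScore τ) := by
  intro s t hst
  rcases le_or_gt t 0 with ht | ht
  · rw [expectileScore_of_nonpos τ ht, expectileScore_of_nonpos τ (hst.le.trans ht)]
    exact mul_lt_mul_of_pos_left hst (sub_pos.2 h₁)
  rcases le_or_gt 0 s with hs | hs
  · rw [expectileScore_of_nonneg τ ht.le, expectileScore_of_nonneg τ hs]
    exact mul_lt_mul_of_pos_left hst h₀
  · rw [expectileScore_of_nonneg τ ht.le, expectileScore_of_nonpos τ hs.le]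
    nlinarith [mul_pos h₀ ht, mul_neg_of_pos_of_neg (sub_pos.2 h₁) hs]

section Gap

variable {κ : Type*} [Fintype κ] {τ τ₁ τ₂ c y : ℝ} {v z z₁ z₂ : κ → ℝ}

theorem expectileFOC_iff_expectileGap_eq_zero :
    ExpectileFOC τ v z y ↔ expectileGap τ v z y = 0 := by
  simp only [ExpectileFOC, expectileGap, expectileScore, neg_sub, mul_sub, mul_sum,
    sum_sub_distrib, mul_left_comm (v _), sub_eq_zero]

theorem expectileGap_strictAnti (hv : 0 ≤ v) (hv_pos : 0 < ∑ i, v i) (h₀ : 0 < τ) (h₁ : τ < 1) :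
    StrictAnti (expectileGap τ v z) := by
  intro y y' hy
  obtain ⟨i, -, hi⟩ := exists_lt_of_sum_lt (s := univ) (f := 0) (g := v) (by simpa using hv_pos)
  refine sum_lt_sum (fun j _ => ?_) ⟨i, mem_univ i, ?_⟩
  · exact mul_le_mul_of_nonneg_left ((strictMono_expectileScore h₀ h₁).monotone (by linarith))
      (hv j)
  · exact mul_lt_mul_of_pos_left (strictMono_expectileScore h₀ h₁ (by linarith)) hi

theorem expectileGap_add_le_of_le_add (hv : 0 ≤ v) (h₀ : 0 ≤ τ) (h₁ : τ ≤ 1)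
    (hz : ∀ i, z₁ i ≤ z₂ i + c) : expectileGap τ v z₁ (y + c) ≤ expectileGap τ v z₂ y :=
  sum_le_sum fun i _ =>
    mul_le_mul_of_nonneg_left (monotone_expectileScore h₀ h₁ (by linarith [hz i])) (hv i)

theorem expectileGap_le_of_le_left (hv : 0 ≤ v) (hτ : τ₁ ≤ τ₂) :
    expectileGap τ₁ v z y ≤ expectileGap τ₂ v z y :=
  sum_le_sum fun i _ => mul_le_mul_of_nonneg_left (monotone_expectileScore_left _ hτ) (hv i)

theorem ExpectileFOC.le_add_of_le_add {y₁ y₂ : ℝ} (hv : 0 ≤ v) (hv_pos : 0 < ∑ i, v i)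
    (hτ₁ : 0 < τ₁) (hτ₁' : τ₁ < 1) (hτ₁₂ : τ₁ ≤ τ₂) (hz : ∀ i, z₁ i ≤ z₂ i + c)
    (h₁ : ExpectileFOC τ₁ v z₁ y₁) (h₂ : ExpectileFOC τ₂ v z₂ y₂) : y₁ ≤ y₂ + c := by
  rw [expectileFOC_iff_expectileGap_eq_zero] at h₁ h₂
  by_contra! hy
  have := calc
    0 = expectileGap τ₁ v z₁ y₁ := h₁.symm
    _ < expectileGap τ₁ v z₁ (y₂ + c) := expectileGap_strictAnti hv hv_pos hτ₁ hτ₁' hy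
    _ ≤ expectileGap τ₁ v z₂ y₂ := expectileGap_add_le_of_le_add hv hτ₁.le hτ₁'.le hz
    _ ≤ expectileGap τ₂ v z₂ y₂ := expectileGap_le_of_le_left hv hτ₁₂
    _ = 0 := h₂
  exact lt_irrefl 0 this

end Gap

theorem IsExpectileBellmanImage.le_add_of_le_add {S A : Type*} [Fintype S] [Fintype A]
    {γ τ₁ τ₂ c : ℝ} {w ρ : S → A × S → ℝ} {V₁ V₂ U₁ U₂ : S → ℝ} (hγ : 0 ≤ γ)
    (hw : ∀ s p, 0 ≤ w s p) (hw_pos : ∀ s, 0 < ∑ p, w s p)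
    (hτ₁ : 0 < τ₁) (hτ₁' : τ₁ < 1) (hτ₁₂ : τ₁ ≤ τ₂) (hV : ∀ s, V₁ s ≤ V₂ s + c)
    (h₁ : IsExpectileBellmanImage γ τ₁ w ρ V₁ U₁) (h₂ : IsExpectileBellmanImage γ τ₂ w ρ V₂ U₂)
    (s : S) : U₁ s ≤ U₂ s + γ * c :=
  (h₁ s).le_add_of_le_add (hw s) (hw_pos s) hτ₁ hτ₁' hτ₁₂
    (fun p => by nlinarith [mul_le_mul_of_nonneg_left (hV p.2) hγ]) (h₂ s)

theorem expectileBellman_fixedPoint_mono_general {S A : Type*} [Fintype S] [Fintype A]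
    (γ : ℝ) (hγ : γ ∈ Set.Ioo (0 : ℝ) 1)
    (w : S → A × S → ℝ) (hw : ∀ s p, 0 ≤ w s p) (hw1 : ∀ s, ∑ p : A × S, w s p = 1)
    (ρ : S → A × S → ℝ)
    (τ₁ τ₂ : ℝ) (hτ₁ : 0 < τ₁) (hτ₁₂ : τ₁ ≤ τ₂) (hτ₂ : τ₂ < 1)
    (V₁ V₂ : S → ℝ)
    (h₁ : IsExpectileBellmanImage γ τ₁ w ρ V₁ V₁)
    (h₂ : IsExpectileBellmanImage γ τ₂ w ρ V₂ V₂) :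
    ∀ s, V₁ s ≤ V₂ s := by
  intro s
  obtain ⟨s₀, -, hs₀⟩ := exists_max_image univ (fun s => V₁ s - V₂ s) ⟨s, mem_univ s⟩
  have hV : ∀ s, V₁ s ≤ V₂ s + (V₁ s₀ - V₂ s₀) := fun s => by linarith [hs₀ s (mem_univ s)]
  have hcontract : V₁ s₀ ≤ V₂ s₀ + γ * (V₁ s₀ - V₂ s₀) :=
    h₁.le_add_of_le_add hγ.1.le hw (fun s => by rw [hw1 s]; exact one_pos) hτ₁
      (hτ₁₂.trans_lt hτ₂) hτ₁₂ hV h₂ s₀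
  have hmax_nonpos : V₁ s₀ - V₂ s₀ ≤ 0 := by nlinarith [hγ.2]
  linarith [hs₀ s (mem_univ s)]

/-- The τ-expectile Bellman fixed point is monotonically non-decreasing in τ. -/
theorem expectileBellman_fixedPoint_mono {S A : Type*} [Fintype S] [Fintype A]
    [Nonempty S] [Nonempty A]
    (γ : ℝ) (hγ : γ ∈ Set.Ioo (0 : ℝ) 1)
    (w : S → A × S → ℝ) (hw : ∀ s p, 0 ≤ w s p) (hw1 : ∀ s, ∑ p : A × S, w s p = 1)
    (ρ : S → A × S → ℝ)
    (τ₁ τ₂ : ℝ) (hτ₁ : 0 < τ₁) (hτ₁₂ : τ₁ ≤ τ₂) (hτ₂ : τ₂ < 1)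
    (V₁ V₂ : S → ℝ)
    (h₁ : IsExpectileBellmanImage γ τ₁ w ρ V₁ V₁)
    (h₂ : IsExpectileBellmanImage γ τ₂ w ρ V₂ V₂) :
    ∀ s, V₁ s ≤ V₂ s :=
  expectileBellman_fixedPoint_mono_general γ hγ w hw hw1 ρ τ₁ τ₂ hτ₁ hτ₁₂ hτ₂ V₁ V₂ h₁ h₂
end

section
/- Let μ : S → A → ℝ with μ s a ≥ 0 and ∑_{a} μ s a = 1 for every s, let P : S → A → S → ℝ with P s a s′ ≥ 0 and ∑_{s′} P s a s′ = 1 for all s, a, and let r : S → A → ℝ. Let V : ℝ → S → ℝ be such that for every τ ∈ (0,1) and every s ∈ S, V τ s satisfies the τ-expectile FOC for weights (a,s′) ↦ μ s a · P s a s′ and values (a,s′) ↦ r s a + γ·V τ s′. Then there exists V̄ : S → ℝ such that for every s ∈ S, V τ s converges to V̄ s as τ → 1 from the left (i.e., Tendsto (fun τ => V τ s) (𝓝[<] 1) (𝓝 (V̄ s))), and V̄ satisfies V̄ s = max_{a ∈ supp(μ s)} ( r s a + γ · max_{s′ ∈ supp(P s a)} V̄ s′ ) for every s. -/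
open Finset Filter Topology

lemma Finite.exists_pos_le_of_pos {ι : Type*} [Finite ι] (f : ι → ℝ) :
    ∃ δ > 0, ∀ i, 0 < f i → δ ≤ f i := by
  rcases isEmpty_or_nonempty ι with hι | hι
  · exact ⟨1, one_pos, fun i => isEmptyElim i⟩
  obtain ⟨i₀, hi₀⟩ := Finite.exists_min fun i => if 0 < f i then f i else 1
  refine ⟨_, ?_, fun i hi => (hi₀ i).trans_eq (if_pos hi)⟩
  split_ifs with h
  exacts [h, one_pos]

lemma Finset.exists_pos_of_sum_eq_one {ι : Type*} [Fintype ι] {f : ι → ℝ}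
    (h : ∑ i, f i = 1) : ∃ i, 0 < f i := by
  obtain ⟨i, -, hi⟩ := exists_lt_of_sum_lt (s := univ) (f := 0) (g := f) (by simp [h])
  exact ⟨i, hi⟩

lemma Finset.filter_pos_nonempty_of_sum_eq_one {ι : Type*} [Fintype ι] {f : ι → ℝ}
    (h : ∑ i, f i = 1) : (univ.filter fun i => 0 < f i).Nonempty := by
  obtain ⟨i, hi⟩ := exists_pos_of_sum_eq_one h
  exact ⟨i, mem_filter.2 ⟨mem_univ i, hi⟩⟩

namespace ExpectileFOC

variable {κ : Type*} [Fintype κ] {τ y : ℝ} {v z : κ → ℝ}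

lemma neg (h : ExpectileFOC τ v z y) : ExpectileFOC (1 - τ) v (-z) (-y) := by
  unfold ExpectileFOC at *
  simp only [Pi.neg_apply, neg_sub_neg, sub_sub_cancel]
  exact h.symm

lemma le_of_forall_le (hτ : τ < 1) (hv : ∀ i, 0 ≤ v i) (h : ExpectileFOC τ v z y)
    {i₀ : κ} (hi₀ : 0 < v i₀) {M : ℝ} (hM : ∀ i, 0 < v i → z i ≤ M) : y ≤ M := by
  by_contra! hMy
  have hupper : ∑ i, v i * max (z i - y) 0 = 0 := sum_eq_zero fun i _ => by
    rcases (hv i).eq_or_lt with hi | hi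
    · rw [← hi, zero_mul]
    · rw [max_eq_right (by linarith [hM i hi]), mul_zero]
  have hlower : 0 < ∑ i, v i * max (y - z i) 0 :=
    (mul_pos hi₀ (lt_max_of_lt_left (by linarith [hM i₀ hi₀]))).trans_le
      (single_le_sum (fun i _ => mul_nonneg (hv i) (le_max_right _ _)) (mem_univ i₀))
  unfold ExpectileFOC at h
  rw [hupper, mul_zero] at h
  exact (mul_pos (sub_pos.2 hτ) hlower).ne' h.symm

lemma ge_of_forall_ge (hτ : 0 < τ) (hv : ∀ i, 0 ≤ v i) (h : ExpectileFOC τ v z y)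
    {i₀ : κ} (hi₀ : 0 < v i₀) {m : ℝ} (hm : ∀ i, 0 < v i → m ≤ z i) : m ≤ y :=
  neg_le_neg_iff.1 <|
    h.neg.le_of_forall_le (by linarith) hv hi₀ fun i hi => neg_le_neg (hm i hi)

lemma abs_le_of_forall_abs_le (hτ : τ ∈ Set.Ioo 0 1) (hv : ∀ i, 0 ≤ v i)
    (h : ExpectileFOC τ v z y) {i₀ : κ} (hi₀ : 0 < v i₀) {M : ℝ}
    (hM : ∀ i, 0 < v i → |z i| ≤ M) : |y| ≤ M :=
  abs_le.2 ⟨h.ge_of_forall_ge hτ.1 hv hi₀ fun i hi => (abs_le.1 (hM i hi)).1,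
    h.le_of_forall_le hτ.2 hv hi₀ fun i hi => (abs_le.1 (hM i hi)).2⟩

lemma mul_sub_le (hτ : τ ∈ Set.Icc 0 1) (hv : ∀ i, 0 ≤ v i) (hsum : ∑ i, v i = 1)
    (h : ExpectileFOC τ v z y) {D : ℝ} (hD₀ : 0 ≤ D) (hD : ∀ i, y - z i ≤ D) (i : κ) :
    τ * (v i * (z i - y)) ≤ (1 - τ) * D :=
  calc τ * (v i * (z i - y)) ≤ τ * ∑ j, v j * max (z j - y) 0 := by
        refine mul_le_mul_of_nonneg_left ?_ hτ.1
        exact (mul_le_mul_of_nonneg_left (le_max_left (z i - y) 0) (hv i)).trans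
          (single_le_sum (f := fun j => v j * max (z j - y) 0)
            (fun j _ => mul_nonneg (hv j) (le_max_right _ _)) (mem_univ i))
    _ = (1 - τ) * ∑ j, v j * max (y - z j) 0 := h
    _ ≤ (1 - τ) * ∑ j, v j * D := by
        gcongr with j
        · linarith [hτ.2]
        · exact hv j
        · exact max_le (hD j) hD₀
    _ = (1 - τ) * D := by rw [← sum_mul, hsum, one_mul]

end ExpectileFOC

section Bellman

variable {S A : Type*} [Fintype S] [Fintype A]

noncomputable def optimisticBellman (γ : ℝ) (μ : S → A → ℝ) (P : S → A → S → ℝ)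
    (r : S → A → ℝ) (hμ : ∀ s, (univ.filter fun a => 0 < μ s a).Nonempty)
    (hP : ∀ s a, (univ.filter fun s' => 0 < P s a s').Nonempty) (w : S → ℝ) (s : S) : ℝ :=
  (univ.filter fun a => 0 < μ s a).sup' (hμ s)
    fun a => r s a + γ * (univ.filter fun s' => 0 < P s a s').sup' (hP s a) w

abbrev IsExpectileFixedPoint (τ γ : ℝ) (μ : S → A → ℝ) (P : S → A → S → ℝ) (r : S → A → ℝ)
    (W : S → ℝ) : Prop :=
  ∀ s, ExpectileFOC τ (fun p : A × S => μ s p.1 * P s p.1 p.2)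
    (fun p : A × S => r s p.1 + γ * W p.2) (W s)

variable {τ γ : ℝ} {μ : S → A → ℝ} {P : S → A → S → ℝ} {r : S → A → ℝ}
  {hμ : ∀ s, (univ.filter fun a => 0 < μ s a).Nonempty}
  {hP : ∀ s a, (univ.filter fun s' => 0 < P s a s').Nonempty}

lemma le_optimisticBellman (hγ : 0 ≤ γ) (w : S → ℝ) {s : S} {a : A} {s' : S}
    (ha : 0 < μ s a) (hs' : 0 < P s a s') :
    r s a + γ * w s' ≤ optimisticBellman γ μ P r hμ hP w s := by
  refine le_sup'_of_le _ (mem_filter.2 ⟨mem_univ a, ha⟩) ?_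
  gcongr
  exact le_sup'_of_le w (mem_filter.2 ⟨mem_univ s', hs'⟩) le_rfl

lemma exists_optimisticBellman_eq (w : S → ℝ) (s : S) :
    ∃ a s', 0 < μ s a ∧ 0 < P s a s' ∧
      optimisticBellman γ μ P r hμ hP w s = r s a + γ * w s' := by
  obtain ⟨a, ha, hTa⟩ := exists_mem_eq_sup' (hμ s)
    fun a => r s a + γ * (univ.filter fun s' => 0 < P s a s').sup' (hP s a) w
  obtain ⟨s', hs', hws'⟩ := exists_mem_eq_sup' (hP s a) w
  exact ⟨a, s', (mem_filter.1 ha).2, (mem_filter.1 hs').2, by rw [optimisticBellman, hTa, hws']⟩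

lemma optimisticBellman_le_add (hγ : 0 ≤ γ) {w u : S → ℝ} {c : ℝ} (h : ∀ s, w s ≤ u s + c)
    (s : S) :
    optimisticBellman γ μ P r hμ hP w s ≤ optimisticBellman γ μ P r hμ hP u s + γ * c := by
  obtain ⟨a, s', ha, hs', hw⟩ := exists_optimisticBellman_eq (hμ := hμ) (hP := hP) (r := r) w s
  calc optimisticBellman γ μ P r hμ hP w s = r s a + γ * w s' := hw
    _ ≤ r s a + γ * u s' + γ * c := by linarith [mul_le_mul_of_nonneg_left (h s') hγ]
    _ ≤ optimisticBellman γ μ P r hμ hP u s + γ * c := by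
        gcongr
        exact le_optimisticBellman hγ u ha hs'

lemma contractingWith_optimisticBellman (hγ₀ : 0 ≤ γ) (hγ₁ : γ < 1) :
    ContractingWith ⟨γ, hγ₀⟩ (optimisticBellman γ μ P r hμ hP) := by
  have hle (w u : S → ℝ) (s : S) : w s ≤ u s + dist w u := by
    have := dist_le_pi_dist w u s
    rw [Real.dist_eq] at this
    linarith [le_abs_self (w s - u s)]
  have hT (w u : S → ℝ) (s : S) :
      optimisticBellman γ μ P r hμ hP w s ≤ optimisticBellman γ μ P r hμ hP u s + γ * dist w u :=
    optimisticBellman_le_add hγ₀ (hle w u) s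
  refine ⟨hγ₁, LipschitzWith.of_dist_le_mul fun w u =>
    (dist_pi_le_iff (by positivity)).2 fun s => ?_⟩
  rw [Real.dist_eq, abs_sub_le_iff]
  change _ ≤ γ * _ ∧ _ ≤ γ * _
  have hTuw := hT u w s
  rw [dist_comm] at hTuw
  constructor <;> linarith [hT w u s]

lemma sum_policy_mul_transition_eq_one (hμ₁ : ∀ s, ∑ a, μ s a = 1)
    (hP₁ : ∀ s a, ∑ s', P s a s' = 1) (s : S) :
    ∑ p : A × S, μ s p.1 * P s p.1 p.2 = 1 := by
  simp only [Fintype.sum_prod_type, ← mul_sum, hP₁, mul_one, hμ₁]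

namespace IsExpectileFixedPoint

variable {W : S → ℝ}

lemma norm_le (hγ₀ : 0 ≤ γ) (hγ₁ : γ < 1) (hμ₀ : ∀ s a, 0 ≤ μ s a)
    (hμ₁ : ∀ s, ∑ a, μ s a = 1) (hP₀ : ∀ s a s', 0 ≤ P s a s')
    (hP₁ : ∀ s a, ∑ s', P s a s' = 1) (hτ : τ ∈ Set.Ioo 0 1)
    (hW : IsExpectileFixedPoint τ γ μ P r W) : ‖W‖ ≤ ‖r‖ / (1 - γ) := by
  have hpoint (s : S) : |W s| ≤ ‖r‖ + γ * ‖W‖ := by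
    obtain ⟨p₀, hp₀⟩ := exists_pos_of_sum_eq_one (sum_policy_mul_transition_eq_one hμ₁ hP₁ s)
    refine (hW s).abs_le_of_forall_abs_le hτ (fun p => mul_nonneg (hμ₀ _ _) (hP₀ _ _ _)) hp₀
      fun p _ => ?_
    have hr : |r s p.1| ≤ ‖r‖ := (norm_le_pi_norm (r s) p.1).trans (norm_le_pi_norm r s)
    calc |r s p.1 + γ * W p.2| ≤ |r s p.1| + γ * |W p.2| :=
          (abs_add_le _ _).trans_eq (by rw [abs_mul, abs_of_nonneg hγ₀])
      _ ≤ ‖r‖ + γ * ‖W‖ := by gcongr; exact norm_le_pi_norm W p.2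
  have hnorm : ‖W‖ ≤ ‖r‖ + γ * ‖W‖ :=
    (pi_norm_le_iff_of_nonneg (by positivity)).2 fun s => (Real.norm_eq_abs _).trans_le (hpoint s)
  rw [le_div_iff₀ (by linarith)]
  linarith

lemma le_optimisticBellman (hγ₀ : 0 ≤ γ) (hμ₀ : ∀ s a, 0 ≤ μ s a)
    (hP₀ : ∀ s a s', 0 ≤ P s a s') (hτ : τ < 1) (hW : IsExpectileFixedPoint τ γ μ P r W)
    (s : S) : W s ≤ optimisticBellman γ μ P r hμ hP W s := by
  obtain ⟨a, s', ha, hs', -⟩ :=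
    exists_optimisticBellman_eq (γ := γ) (hμ := hμ) (hP := hP) (r := r) W s
  refine (hW s).le_of_forall_le hτ (fun p => mul_nonneg (hμ₀ _ _) (hP₀ _ _ _))
    (i₀ := (a, s')) (mul_pos ha hs') fun p hp => ?_
  exact _root_.le_optimisticBellman hγ₀ W (pos_of_mul_pos_left hp (hP₀ _ _ _))
    (pos_of_mul_pos_right hp (hμ₀ _ _))

lemma dist_optimisticBellman_le (hγ₀ : 0 ≤ γ) (hγ₁ : γ < 1) (hμ₀ : ∀ s a, 0 ≤ μ s a)
    (hμ₁ : ∀ s, ∑ a, μ s a = 1) (hP₀ : ∀ s a s', 0 ≤ P s a s')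
    (hP₁ : ∀ s a, ∑ s', P s a s' = 1) (hτ : τ ∈ Set.Ioo 0 1) {δ : ℝ} (hδ₀ : 0 < δ)
    (hδ : ∀ s a s', 0 < μ s a * P s a s' → δ ≤ μ s a * P s a s')
    (hW : IsExpectileFixedPoint τ γ μ P r W) :
    dist W (optimisticBellman γ μ P r hμ hP W) ≤ (1 - τ) / τ * (2 * ‖r‖ / (1 - γ) / δ) := by
  set R := ‖r‖ / (1 - γ) with hR
  have hrR : ‖r‖ = (1 - γ) * R := by rw [hR, mul_div_cancel₀ _ (by linarith)]
  have hWR (x : S) : |W x| ≤ R :=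
    (norm_le_pi_norm W x).trans (hW.norm_le hγ₀ hγ₁ hμ₀ hμ₁ hP₀ hP₁ hτ)
  have hR₀ : 0 ≤ R := div_nonneg (norm_nonneg r) (by linarith)
  have h2R : 2 * ‖r‖ / (1 - γ) = 2 * R := mul_div_assoc _ _ _
  have hdown (s : S) (p : A × S) : W s - (r s p.1 + γ * W p.2) ≤ 2 * R := by
    have hr : |r s p.1| ≤ ‖r‖ := (norm_le_pi_norm (r s) p.1).trans (norm_le_pi_norm r s)
    have hγW := mul_le_mul_of_nonneg_left (neg_le_of_abs_le (hWR p.2)) hγ₀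
    linarith [le_of_abs_le (hWR s), neg_le_of_abs_le hr]
  refine (dist_pi_le_iff (mul_nonneg (div_nonneg (by linarith [hτ.2]) hτ.1.le)
    (by rw [h2R]; positivity))).2 fun s => ?_
  obtain ⟨a, s', ha, hs', hTW⟩ :=
    exists_optimisticBellman_eq (γ := γ) (hμ := hμ) (hP := hP) (r := r) W s
  have hle : W s ≤ optimisticBellman γ μ P r hμ hP W s :=
    hW.le_optimisticBellman hγ₀ hμ₀ hP₀ hτ.2 s
  rw [hTW, ← sub_nonneg] at hle
  have hgap := (hW s).mul_sub_le ⟨hτ.1.le, hτ.2.le⟩ (fun p => mul_nonneg (hμ₀ _ _) (hP₀ _ _ _))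
    (sum_policy_mul_transition_eq_one hμ₁ hP₁ s) (by positivity) (hdown s) (a, s')
  have hδv := mul_le_mul_of_nonneg_left
    (mul_le_mul_of_nonneg_right (hδ s a s' (mul_pos ha hs')) hle) hτ.1.le
  rw [Real.dist_eq, abs_sub_comm, hTW, abs_of_nonneg hle, h2R, div_mul_div_comm,
    le_div_iff₀ (mul_pos hτ.1 hδ₀)]
  linarith

end IsExpectileFixedPoint

end Bellman

theorem expectile_fixedPoint_tendsto_limit_general {S A : Type*}
    [Fintype S] [Fintype A]
    (γ : ℝ) (hγ : γ ∈ Set.Ioo (0 : ℝ) 1)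
    (μ : S → A → ℝ) (hμ0 : ∀ s a, 0 ≤ μ s a) (hμ1 : ∀ s, ∑ a, μ s a = 1)
    (P : S → A → S → ℝ) (hP0 : ∀ s a s', 0 ≤ P s a s') (hP1 : ∀ s a, ∑ s', P s a s' = 1)
    (r : S → A → ℝ)
    (V : ℝ → S → ℝ)
    (hV : ∀ τ ∈ Set.Ioo (0 : ℝ) 1, ∀ s,
      ExpectileFOC τ (fun p : A × S => μ s p.1 * P s p.1 p.2)
        (fun p : A × S => r s p.1 + γ * V τ p.2) (V τ s)) :
    ∃ (hμne : ∀ s, (Finset.univ.filter fun a => 0 < μ s a).Nonempty)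
      (hPne : ∀ s a, (Finset.univ.filter fun s' => 0 < P s a s').Nonempty)
      (Vbar : S → ℝ),
      (∀ s, Tendsto (fun τ => V τ s) (𝓝[<] (1 : ℝ)) (𝓝 (Vbar s))) ∧
      (∀ s, Vbar s =
        (Finset.univ.filter fun a => 0 < μ s a).sup' (hμne s)
          (fun a => r s a + γ *
            (Finset.univ.filter fun s' => 0 < P s a s').sup' (hPne s a) Vbar)) := by
  obtain ⟨hγ₀, hγ₁⟩ := hγ
  have hμne (s : S) := filter_pos_nonempty_of_sum_eq_one (hμ1 s)
  have hPne (s : S) (a : A) := filter_pos_nonempty_of_sum_eq_one (hP1 s a)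
  have hT := contractingWith_optimisticBellman (μ := μ) (P := P) (r := r) (hμ := hμne)
    (hP := hPne) hγ₀.le hγ₁
  set Vbar := ContractingWith.fixedPoint _ hT
  obtain ⟨δ, hδ₀, hδ⟩ :=
    Finite.exists_pos_le_of_pos fun q : S × A × S => μ q.1 q.2.1 * P q.1 q.2.1 q.2.2
  set C := 2 * ‖r‖ / (1 - γ) / δ / (1 - γ)
  have hdist (τ : ℝ) (hτ : τ ∈ Set.Ioo 0 1) : dist (V τ) Vbar ≤ (1 - τ) / τ * C := by
    refine (hT.dist_fixedPoint_le (V τ)).trans ?_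
    rw [← mul_div_assoc]
    exact div_le_div_of_nonneg_right (IsExpectileFixedPoint.dist_optimisticBellman_le
      hγ₀.le hγ₁ hμ0 hμ1 hP0 hP1 hτ hδ₀ (fun s a s' => hδ (s, a, s')) (hV τ hτ))
      (sub_nonneg.2 hγ₁.le)
  have hC : Tendsto (fun τ : ℝ => (1 - τ) / τ * C) (𝓝[<] 1) (𝓝 0) := by
    have : ContinuousAt (fun τ : ℝ => (1 - τ) / τ * C) 1 := by fun_prop (disch := norm_num)
    simpa using this.tendsto.mono_left nhdsWithin_le_nhds
  have hconv : Tendsto V (𝓝[<] 1) (𝓝 Vbar) := tendsto_iff_dist_tendsto_zero.2 <|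
    squeeze_zero' (.of_forall fun _ => dist_nonneg)
      (by filter_upwards [Ioo_mem_nhdsLT zero_lt_one] with τ hτ using hdist τ hτ) hC
  exact ⟨hμne, hPne, Vbar, fun s => tendsto_pi_nhds.1 hconv s,
    fun s => (congrFun hT.fixedPoint_isFixedPt s).symm⟩

/-- For stochastic dynamics, the τ-expectile Bellman fixed points converge, as `τ → 1⁻`,
to a limit `V̄` satisfying
`V̄ s = max_{a ∈ supp (μ s)} (r s a + γ * max_{s' ∈ supp (P s a)} V̄ s')`. -/
theorem expectile_fixedPoint_tendsto_limit {S A : Type*}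
    [Fintype S] [Fintype A] [Nonempty S] [Nonempty A]
    (γ : ℝ) (hγ : γ ∈ Set.Ioo (0 : ℝ) 1)
    (μ : S → A → ℝ) (hμ0 : ∀ s a, 0 ≤ μ s a) (hμ1 : ∀ s, ∑ a, μ s a = 1)
    (P : S → A → S → ℝ) (hP0 : ∀ s a s', 0 ≤ P s a s') (hP1 : ∀ s a, ∑ s', P s a s' = 1)
    (r : S → A → ℝ)
    (V : ℝ → S → ℝ)
    (hV : ∀ τ ∈ Set.Ioo (0 : ℝ) 1, ∀ s,
      ExpectileFOC τ (fun p : A × S => μ s p.1 * P s p.1 p.2)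
        (fun p : A × S => r s p.1 + γ * V τ p.2) (V τ s)) :
    ∃ (hμne : ∀ s, (Finset.univ.filter fun a => 0 < μ s a).Nonempty)
      (hPne : ∀ s a, (Finset.univ.filter fun s' => 0 < P s a s').Nonempty)
      (Vbar : S → ℝ),
      (∀ s, Tendsto (fun τ => V τ s) (𝓝[<] (1 : ℝ)) (𝓝 (Vbar s))) ∧
      (∀ s, Vbar s =
        (Finset.univ.filter fun a => 0 < μ s a).sup' (hμne s)
          (fun a => r s a + γ *
            (Finset.univ.filter fun s' => 0 < P s a s').sup' (hPne s a) Vbar)) :=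
  expectile_fixedPoint_tendsto_limit_general γ hγ μ hμ0 hμ1 P hP0 hP1 r V hV
end
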